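/- A strict 4-gon (V_0, V_1, V_2, V_3) is convex if and only if the four determinants Δ_{0,1,2}, Δ_{0,1,3}, Δ_{0,2,3}, Δ_{1,2,3} all have the same sign (all positive or all negative). -/

import Mathlib

/-- The union of the edges of the polygon `P = (V_0, …, V_{n-1})`, i.e. of the closed
segments `[V_i, V_{i+1}]` (indices mod `n`, so the last edge is `[V_{n-1}, V_0]`). -/
def polygonEdges {n : ℕ} (P : Fin n → ℝ × ℝ) : Set (ℝ × ℝ) :=
  ⋃ i : Fin n, segment ℝ (P i) (P ⟨(i.1 + 1) % n, Nat.mod_lt _ i.pos⟩)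

/-- A polygon is convex iff the union of its edges is the topological boundary of the
convex hull of its vertex set. -/
def IsConvexPolygon {n : ℕ} (P : Fin n → ℝ × ℝ) : Prop :=
  polygonEdges P = frontier (convexHull ℝ (Set.range P))

/-- A polygon is strict iff any three vertices with distinct indices are non-collinear. -/
def IsStrictPolygon {n : ℕ} (P : Fin n → ℝ × ℝ) : Prop :=
  ∀ i j k : Fin n, i ≠ j → i ≠ k → j ≠ k →
    ¬ Collinear ℝ ({P i, P j, P k} : Set (ℝ × ℝ))

/-- The determinant `Δ_{i,j,k}` of the polygon `P`, where `P r = (x_r, y_r)`. -/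
def polyDet {n : ℕ} (P : Fin n → ℝ × ℝ) (i j k : Fin n) : ℝ :=
  Matrix.det !![1, (P i).1, (P i).2; 1, (P j).1, (P j).2; 1, (P k).1, (P k).2]



noncomputable def dd (A B C : ℝ × ℝ) : ℝ :=
  (B.1 - A.1) * (C.2 - A.2) - (B.2 - A.2) * (C.1 - A.1)

lemma dd_affine (A B : ℝ × ℝ) (x y : ℝ × ℝ) (a b : ℝ) (hab : a + b = 1) :
    dd A B (a • x + b • y) = a * dd A B x + b * dd A B y := by
  have hb : b = 1 - a := by linarith
  subst hb
  simp only [dd, Prod.smul_def, Prod.fst_add, Prod.snd_add, smul_eq_mul,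
    Prod.fst_mul, Prod.snd_mul]
  ring

lemma dd_self_left (A B : ℝ × ℝ) : dd A B A = 0 := by simp [dd]
lemma dd_self_right (A B : ℝ × ℝ) : dd A B B = 0 := by simp [dd]; ring

lemma dd_sum (A B C p : ℝ × ℝ) : dd B C p + dd C A p + dd A B p = dd A B C := by
  simp only [dd]; ring

lemma continuous_dd (A B : ℝ × ℝ) : Continuous (fun p => dd A B p) := by
  unfold dd; fun_prop

lemma cramer (A B C p : ℝ × ℝ) :
    dd A B C • p = dd B C p • A + dd C A p • B + dd A B p • C := by
  apply Prod.ext <;>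
    simp only [dd, Prod.smul_def, Prod.fst_add, Prod.snd_add, smul_eq_mul] <;> ring

lemma mem_triangle {A B C p : ℝ × ℝ} (hABC : 0 < dd A B C)
    (h1 : 0 ≤ dd B C p) (h2 : 0 ≤ dd C A p) (h3 : 0 ≤ dd A B p) :
    p ∈ convexHull ℝ ({A, B, C} : Set (ℝ × ℝ)) := by
  have hsum : dd B C p + dd C A p + dd A B p = dd A B C := dd_sum A B C p
  have key : (Finset.univ : Finset (Fin 3)).centerMass ![dd B C p, dd C A p, dd A B p]
      ![A, B, C] ∈ convexHull ℝ ({A, B, C} : Set (ℝ × ℝ)) := Finset.centerMass_mem_convexHull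
    (Finset.univ : Finset (Fin 3))
    (by intro i _; fin_cases i <;> simpa)
    (by rw [Fin.sum_univ_three]; simpa [hsum] using hABC)
    (by intro i _; fin_cases i <;> simp [Set.mem_insert_iff])
  have : (Finset.univ : Finset (Fin 3)).centerMass ![dd B C p, dd C A p, dd A B p] ![A, B, C] = p := by
    rw [Finset.centerMass]
    rw [Fin.sum_univ_three, Fin.sum_univ_three]
    simp only [Matrix.cons_val_zero, Matrix.cons_val_one, Matrix.head_cons,
      Matrix.cons_val_two, Matrix.tail_cons]
    rw [hsum, ← cramer A B C p, inv_smul_smul₀ (ne_of_gt hABC)]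
  rwa [this] at key

lemma param_of_dd_eq_zero {A B p : ℝ × ℝ} (hAB : A ≠ B) (h : dd A B p = 0) :
    ∃ t : ℝ, p = (1 - t) • A + t • B := by
  set u := B.1 - A.1 with hu
  set v := B.2 - A.2 with hv
  have huv : u^2 + v^2 ≠ 0 := by
    intro hc
    have h1 : u = 0 := by nlinarith [sq_nonneg u, sq_nonneg v]
    have h2 : v = 0 := by nlinarith [sq_nonneg u, sq_nonneg v]
    exact hAB (Prod.ext (by dsimp [u] at h1; linarith) (by dsimp [v] at h2; linarith))
  refine ⟨((p.1 - A.1) * u + (p.2 - A.2) * v) / (u^2 + v^2), ?_⟩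
  have hrel : u * (p.2 - A.2) = v * (p.1 - A.1) := by
    have h' := h; unfold dd at h'; dsimp [u, v]; linarith
  have hB1 : B.1 = A.1 + u := by dsimp [u]; ring
  have hB2 : B.2 = A.2 + v := by dsimp [v]; ring
  apply Prod.ext <;>
    simp only [Prod.smul_def, Prod.fst_add, Prod.snd_add, smul_eq_mul] <;>
    field_simp
  · linear_combination (-v) * hrel + ((p.1 - A.1) * u + (p.2 - A.2) * v) * hu
  · linear_combination u * hrel + ((p.1 - A.1) * u + (p.2 - A.2) * v) * hv

lemma collinear_of_dd_eq_zero {A B C : ℝ × ℝ} (h : dd A B C = 0) :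
    Collinear ℝ ({A, B, C} : Set (ℝ × ℝ)) := by
  rcases eq_or_ne A B with rfl | hAB
  · have : ({A, A, C} : Set (ℝ × ℝ)) = {A, C} := by ext x; simp [or_comm, or_assoc]
    rw [this]; exact collinear_pair ℝ A C
  obtain ⟨t, ht⟩ := param_of_dd_eq_zero hAB h
  apply Collinear.subset (s₂ := ({A, B, C} : Set (ℝ × ℝ))) (le_refl _)
  rw [collinear_iff_of_mem (Set.mem_insert A _)]
  refine ⟨B - A, ?_⟩
  intro p hp
  rcases hp with rfl | rfl | rfl
  · exact ⟨0, by simp⟩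
  · exact ⟨1, by simp⟩
  · refine ⟨t, ?_⟩
    rw [ht]
    apply Prod.ext <;> simp [Prod.smul_def, smul_eq_mul] <;> ring

lemma dd_rot (A B C : ℝ × ℝ) : dd B C A = dd A B C := by unfold dd; ring
lemma dd_swap (A B C : ℝ × ℝ) : dd B A C = -dd A B C := by unfold dd; ring

section Quad
variable {V0 V1 V2 V3 : ℝ × ℝ}

lemma convex_H : Convex ℝ {p : ℝ × ℝ |
    0 ≤ dd V0 V1 p ∧ 0 ≤ dd V1 V2 p ∧ 0 ≤ dd V2 V3 p ∧ 0 ≤ dd V3 V0 p} := by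
  intro x hx y hy a b ha hb hab
  obtain ⟨hx1, hx2, hx3, hx4⟩ := hx
  obtain ⟨hy1, hy2, hy3, hy4⟩ := hy
  refine ⟨?_, ?_, ?_, ?_⟩ <;> rw [dd_affine _ _ x y a b hab] <;> positivity

lemma hull_eq_H (h012 : 0 < dd V0 V1 V2) (h013 : 0 < dd V0 V1 V3)
    (h023 : 0 < dd V0 V2 V3) (h123 : 0 < dd V1 V2 V3) :
    convexHull ℝ ({V0, V1, V2, V3} : Set (ℝ × ℝ)) =
      {p | 0 ≤ dd V0 V1 p ∧ 0 ≤ dd V1 V2 p ∧ 0 ≤ dd V2 V3 p ∧ 0 ≤ dd V3 V0 p} := by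
  apply Set.Subset.antisymm
  · apply convexHull_min _ convex_H
    rintro x (rfl | rfl | rfl | rfl)
    · exact ⟨le_of_eq (dd_self_left _ _).symm, by rw [dd_rot]; exact h012.le,
        by rw [dd_rot]; exact h023.le, le_of_eq (dd_self_right _ _).symm⟩
    · exact ⟨le_of_eq (dd_self_right _ _).symm, le_of_eq (dd_self_left _ _).symm,
        by rw [dd_rot]; exact h123.le, by rw [dd_rot, dd_rot]; exact h013.le⟩
    · exact ⟨h012.le, le_of_eq (dd_self_right _ _).symm,
        le_of_eq (dd_self_left _ _).symm, by rw [dd_rot, dd_rot]; exact h023.le⟩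
    · exact ⟨h013.le, h123.le, le_of_eq (dd_self_right _ _).symm,
        le_of_eq (dd_self_left _ _).symm⟩
  · rintro p ⟨hp1, hp2, hp3, hp4⟩
    rcases le_or_gt 0 (dd V0 V2 p) with h | h
    · have : p ∈ convexHull ℝ ({V0, V2, V3} : Set (ℝ × ℝ)) :=
        mem_triangle h023 hp3 hp4 h
      refine convexHull_mono ?_ this
      intro x hx; rcases hx with rfl | rfl | rfl <;> simp
    · have : p ∈ convexHull ℝ ({V0, V1, V2} : Set (ℝ × ℝ)) :=
        mem_triangle h012 hp2 (by rw [dd_swap]; linarith) hp1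
      refine convexHull_mono ?_ this
      intro x hx; rcases hx with rfl | rfl | rfl <;> simp
end Quad

lemma pos_of_mem_interior {A B : ℝ × ℝ} {S : Set (ℝ × ℝ)} {p : ℝ × ℝ}
    (hAB : A ≠ B) (hS : S ⊆ {q | 0 ≤ dd A B q}) (hp : p ∈ interior S) :
    0 < dd A B p := by
  have h0 : (0:ℝ) ≤ dd A B p := hS (interior_subset hp)
  rcases h0.lt_or_eq with h | h
  · exact h
  exfalso
  set nv : ℝ × ℝ := (B.2 - A.2, A.1 - B.1) with hnv
  have hN : 0 < (B.1 - A.1)^2 + (B.2 - A.2)^2 := by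
    by_contra hc
    push_neg at hc
    have h1 : B.1 - A.1 = 0 := by nlinarith [sq_nonneg (B.1 - A.1), sq_nonneg (B.2 - A.2)]
    have h2 : B.2 - A.2 = 0 := by nlinarith [sq_nonneg (B.1 - A.1), sq_nonneg (B.2 - A.2)]
    exact hAB (Prod.ext (by linarith) (by linarith))
  -- the sequence p + (1/(n+1)) • nv tends to p
  have htend : Filter.Tendsto (fun n : ℕ => p + (1 / (n + 1 : ℝ)) • nv)
      Filter.atTop (nhds p) := by
    have h0 : Filter.Tendsto (fun n : ℕ => (1 / (n + 1 : ℝ))) Filter.atTop (nhds 0) :=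
      tendsto_one_div_add_atTop_nhds_zero_nat
    have := ((h0.smul_const nv).const_add p)
    simpa using this
  have hev : ∀ᶠ n : ℕ in Filter.atTop, p + (1 / (n + 1 : ℝ)) • nv ∈ S :=
    htend.eventually (isOpen_interior.eventually_mem hp) |>.mono
      (fun n hn => interior_subset hn)
  obtain ⟨n, hn⟩ := hev.exists
  have hval : dd A B (p + (1 / (n + 1 : ℝ)) • nv) =
      dd A B p - (1 / (n + 1 : ℝ)) * ((B.1 - A.1)^2 + (B.2 - A.2)^2) := by
    simp only [dd, hnv, Prod.smul_def, Prod.fst_add, Prod.snd_add, smul_eq_mul]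
    ring
  have hpos : (0:ℝ) < 1 / (n + 1 : ℝ) := by positivity
  have := hS hn
  simp only [Set.mem_setOf_eq, hval, ← h] at this
  nlinarith
section Quad2
variable {V0 V1 V2 V3 : ℝ × ℝ}

lemma ne_left_of_dd (h : dd V0 V1 V2 ≠ 0) : V0 ≠ V1 := by
  rintro rfl; exact h (by unfold dd; ring)

lemma ne_mid_of_dd (h : dd V0 V1 V2 ≠ 0) : V1 ≠ V2 := by
  rintro rfl; exact h (by unfold dd; ring)

lemma ne_outer_of_dd (h : dd V0 V1 V2 ≠ 0) : V0 ≠ V2 := by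
  rintro rfl; exact h (by unfold dd; ring)

lemma interior_eq_Hs (h012 : 0 < dd V0 V1 V2) (h013 : 0 < dd V0 V1 V3)
    (h023 : 0 < dd V0 V2 V3) (h123 : 0 < dd V1 V2 V3) :
    interior (convexHull ℝ ({V0, V1, V2, V3} : Set (ℝ × ℝ))) =
      {p | 0 < dd V0 V1 p ∧ 0 < dd V1 V2 p ∧ 0 < dd V2 V3 p ∧ 0 < dd V3 V0 p} := by
  have hH := hull_eq_H h012 h013 h023 h123
  apply Set.Subset.antisymm
  · intro p hp
    have hsub1 : convexHull ℝ ({V0, V1, V2, V3} : Set (ℝ × ℝ)) ⊆ {q | 0 ≤ dd V0 V1 q} := by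
      rw [hH]; exact fun q hq => hq.1
    have hsub2 : convexHull ℝ ({V0, V1, V2, V3} : Set (ℝ × ℝ)) ⊆ {q | 0 ≤ dd V1 V2 q} := by
      rw [hH]; exact fun q hq => hq.2.1
    have hsub3 : convexHull ℝ ({V0, V1, V2, V3} : Set (ℝ × ℝ)) ⊆ {q | 0 ≤ dd V2 V3 q} := by
      rw [hH]; exact fun q hq => hq.2.2.1
    have hsub4 : convexHull ℝ ({V0, V1, V2, V3} : Set (ℝ × ℝ)) ⊆ {q | 0 ≤ dd V3 V0 q} := by
      rw [hH]; exact fun q hq => hq.2.2.2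
    exact ⟨pos_of_mem_interior (ne_left_of_dd h012.ne') hsub1 hp,
      pos_of_mem_interior (ne_mid_of_dd h012.ne') hsub2 hp,
      pos_of_mem_interior (ne_mid_of_dd h023.ne') hsub3 hp,
      pos_of_mem_interior (ne_outer_of_dd h013.ne').symm hsub4 hp⟩
  · apply interior_maximal
    · rw [hH]; exact fun q hq => ⟨hq.1.le, hq.2.1.le, hq.2.2.1.le, hq.2.2.2.le⟩
    · have hset : {p : ℝ × ℝ | 0 < dd V0 V1 p ∧ 0 < dd V1 V2 p ∧ 0 < dd V2 V3 p ∧ 0 < dd V3 V0 p}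
          = ({p | 0 < dd V0 V1 p} ∩ {p | 0 < dd V1 V2 p}) ∩
            ({p | 0 < dd V2 V3 p} ∩ {p | 0 < dd V3 V0 p}) := by
        ext q; simp only [Set.mem_setOf_eq, Set.mem_inter_iff]; tauto
      rw [hset]
      exact ((isOpen_lt continuous_const (continuous_dd V0 V1)).inter
        (isOpen_lt continuous_const (continuous_dd V1 V2))).inter
        ((isOpen_lt continuous_const (continuous_dd V2 V3)).inter
        (isOpen_lt continuous_const (continuous_dd V3 V0)))

end Quad2
-- face of the quadrilateral (A,B,X,Y) along edge AB
lemma face_eq_segment {A B X Y : ℝ × ℝ}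
    (hABX : 0 < dd A B X) (hABY : 0 < dd A B Y)
    (hAXY : 0 < dd A X Y) (hBXY : 0 < dd B X Y) :
    {p : ℝ × ℝ | dd A B p = 0 ∧ 0 ≤ dd B X p ∧ 0 ≤ dd X Y p ∧ 0 ≤ dd Y A p}
      = segment ℝ A B := by
  apply Set.Subset.antisymm
  · rintro p ⟨h0, h1, h2, h3⟩
    obtain ⟨t, rfl⟩ := param_of_dd_eq_zero (ne_left_of_dd hABX.ne') h0
    have e3 : dd Y A ((1 - t) • A + t • B) = t * dd A B Y := by
      rw [dd_affine _ _ _ _ _ _ (by ring), dd_self_right, (by rw [dd_rot] : dd Y A B = dd B Y A), dd_rot]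
      ring
    have e1 : dd B X ((1 - t) • A + t • B) = (1 - t) * dd A B X := by
      rw [dd_affine _ _ _ _ _ _ (by ring), dd_self_left, (by rw [dd_rot] : dd B X A = dd A B X)]
      ring
    rw [e3] at h3
    rw [e1] at h1
    have ht0 : 0 ≤ t := by nlinarith
    have ht1 : t ≤ 1 := by nlinarith
    exact ⟨1 - t, t, by linarith, ht0, by ring, rfl⟩
  · rintro p ⟨u, v, hu, hv, huv, rfl⟩
    refine ⟨?_, ?_, ?_, ?_⟩
    · rw [dd_affine _ _ _ _ _ _ huv, dd_self_left, dd_self_right]; ring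
    · rw [dd_affine _ _ _ _ _ _ huv, dd_self_left, (by rw [dd_rot] : dd B X A = dd A B X)]
      nlinarith
    · rw [dd_affine _ _ _ _ _ _ huv, (by rw [dd_rot] : dd X Y A = dd A X Y),
        (by rw [dd_rot] : dd X Y B = dd B X Y)]
      nlinarith
    · rw [dd_affine _ _ _ _ _ _ huv, dd_self_right,
        (by rw [dd_rot, dd_rot] : dd Y A B = dd A B Y)]
      nlinarith
lemma polyDet_eq_dd {n : ℕ} (P : Fin n → ℝ × ℝ) (i j k : Fin n) :
    polyDet P i j k = dd (P i) (P j) (P k) := by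
  simp [polyDet, Matrix.det_fin_three, dd, Matrix.vecHead, Matrix.vecTail]; ring

lemma range_four (P : Fin 4 → ℝ × ℝ) :
    Set.range P = ({P 0, P 1, P 2, P 3} : Set (ℝ × ℝ)) := by
  ext x
  constructor
  · rintro ⟨i, rfl⟩; fin_cases i <;> simp
  · rintro (rfl | rfl | rfl | rfl)
    exacts [⟨0, rfl⟩, ⟨1, rfl⟩, ⟨2, rfl⟩, ⟨3, rfl⟩]

lemma edges_four (P : Fin 4 → ℝ × ℝ) :
    polygonEdges P = segment ℝ (P 0) (P 1) ∪ segment ℝ (P 1) (P 2) ∪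
      segment ℝ (P 2) (P 3) ∪ segment ℝ (P 3) (P 0) := by
  unfold polygonEdges
  ext x
  simp only [Set.mem_iUnion, Set.mem_union]
  constructor
  · rintro ⟨i, hi⟩
    fin_cases i
    · exact Or.inl (Or.inl (Or.inl (by simpa using hi)))
    · exact Or.inl (Or.inl (Or.inr (by simpa using hi)))
    · exact Or.inl (Or.inr (by simpa using hi))
    · exact Or.inr (by simpa using hi)
  · rintro (((h | h) | h) | h)
    exacts [⟨0, by simpa using h⟩, ⟨1, by simpa using h⟩, ⟨2, by simpa using h⟩,
      ⟨3, by simpa using h⟩]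
lemma mem_interior_hull {S : Set (ℝ × ℝ)} {X Y Z q : ℝ × ℝ}
    (hX : X ∈ S) (hY : Y ∈ S) (hZ : Z ∈ S)
    (h1 : 0 < dd X Y q) (h2 : 0 < dd Y Z q) (h3 : 0 < dd Z X q) :
    q ∈ interior (convexHull ℝ S) := by
  have hsub : {p : ℝ × ℝ | 0 < dd X Y p ∧ 0 < dd Y Z p ∧ 0 < dd Z X p} ⊆ convexHull ℝ S := by
    rintro p ⟨k1, k2, k3⟩
    have hXYZ : 0 < dd X Y Z := by
      have := dd_sum X Y Z p; linarith
    have := mem_triangle hXYZ k2.le k3.le k1.le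
    refine (convexHull_mono ?_) this
    rintro x (rfl | rfl | rfl) <;> assumption
  have hopen : IsOpen {p : ℝ × ℝ | 0 < dd X Y p ∧ 0 < dd Y Z p ∧ 0 < dd Z X p} := by
    have hset : {p : ℝ × ℝ | 0 < dd X Y p ∧ 0 < dd Y Z p ∧ 0 < dd Z X p}
        = {p | 0 < dd X Y p} ∩ ({p | 0 < dd Y Z p} ∩ {p | 0 < dd Z X p}) := by
      ext r; simp only [Set.mem_setOf_eq, Set.mem_inter_iff]
    rw [hset]
    exact (isOpen_lt continuous_const (continuous_dd X Y)).inter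
      ((isOpen_lt continuous_const (continuous_dd Y Z)).inter
        (isOpen_lt continuous_const (continuous_dd Z X)))
  exact interior_maximal hsub hopen ⟨h1, h2, h3⟩

lemma not_convex_of_witness {P : Fin 4 → ℝ × ℝ} {q : ℝ × ℝ}
    (hq_edge : q ∈ polygonEdges P)
    (hq_int : q ∈ interior (convexHull ℝ (Set.range P))) :
    ¬ IsConvexPolygon P := by
  intro h
  rw [IsConvexPolygon] at h
  rw [h] at hq_edge
  exact hq_edge.2 hq_int

lemma vertex_mem_edges (P : Fin 4 → ℝ × ℝ) (i : Fin 4) : P i ∈ polygonEdges P :=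
  Set.mem_iUnion.2 ⟨i, left_mem_segment ℝ _ _⟩

lemma dets_ne_zero {P : Fin 4 → ℝ × ℝ} (hP : IsStrictPolygon P) (i j k : Fin 4)
    (hij : i ≠ j) (hik : i ≠ k) (hjk : j ≠ k) : dd (P i) (P j) (P k) ≠ 0 :=
  fun h => hP i j k hij hik hjk (collinear_of_dd_eq_zero h)
lemma main_pos {V0 V1 V2 V3 : ℝ × ℝ}
    (h012 : 0 < dd V0 V1 V2) (h013 : 0 < dd V0 V1 V3)
    (h023 : 0 < dd V0 V2 V3) (h123 : 0 < dd V1 V2 V3) :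
    frontier (convexHull ℝ ({V0, V1, V2, V3} : Set (ℝ × ℝ))) =
      segment ℝ V0 V1 ∪ segment ℝ V1 V2 ∪ segment ℝ V2 V3 ∪ segment ℝ V3 V0 := by
  have r012 : 0 < dd V1 V2 V0 := by rwa [dd_rot]
  have r023 : 0 < dd V2 V3 V0 := by rwa [dd_rot]
  have r123 : 0 < dd V2 V3 V1 := by rwa [dd_rot]
  have r013 : 0 < dd V3 V0 V1 := by rwa [dd_rot, dd_rot]
  have r023' : 0 < dd V3 V0 V2 := by rwa [dd_rot, dd_rot]
  have r013' : 0 < dd V1 V3 V0 := by rwa [dd_rot, dd_rot]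
  have r012' : 0 < dd V2 V0 V1 := by rwa [dd_rot, dd_rot]
  have hclosed : IsClosed (convexHull ℝ ({V0, V1, V2, V3} : Set (ℝ × ℝ))) :=
    (Set.toFinite _).isClosed_convexHull (𝕜 := ℝ)
  rw [hclosed.frontier_eq, interior_eq_Hs h012 h013 h023 h123, hull_eq_H h012 h013 h023 h123]
  have f01 := face_eq_segment h012 h013 h023 h123
  have f12 := face_eq_segment h123 r012 r013' r023
  have f23 := face_eq_segment r023 r123 r012' r013
  have r123' : 0 < dd V3 V1 V2 := by rw [← dd_rot V3 V1 V2]; exact h123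
  have f30 := face_eq_segment r013 r023' r123' h012
  ext p
  simp only [Set.mem_diff, Set.mem_setOf_eq, Set.mem_union]
  constructor
  · rintro ⟨⟨c1, c2, c3, c4⟩, hns⟩
    rcases c1.lt_or_eq with s1 | s1
    · rcases c2.lt_or_eq with s2 | s2
      · rcases c3.lt_or_eq with s3 | s3
        · rcases c4.lt_or_eq with s4 | s4
          · exact absurd ⟨s1, s2, s3, s4⟩ hns
          · refine Or.inr (f30 ▸ ⟨s4.symm, ?_, ?_, ?_⟩) <;> assumption
        · refine Or.inl (Or.inr (f23 ▸ ⟨s3.symm, ?_, ?_, ?_⟩)) <;> assumption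
      · refine Or.inl (Or.inl (Or.inr (f12 ▸ ⟨s2.symm, ?_, ?_, ?_⟩))) <;> assumption
    · refine Or.inl (Or.inl (Or.inl (f01 ▸ ⟨s1.symm, ?_, ?_, ?_⟩))) <;> assumption
  · rintro (((hp | hp) | hp) | hp)
    · rw [← f01] at hp
      obtain ⟨e, c1, c2, c3⟩ := hp
      exact ⟨⟨e.ge, c1, c2, c3⟩, fun hs => (ne_of_gt hs.1) e⟩
    · rw [← f12] at hp
      obtain ⟨e, c1, c2, c3⟩ := hp
      exact ⟨⟨c3, e.ge, c1, c2⟩, fun hs => (ne_of_gt hs.2.1) e⟩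
    · rw [← f23] at hp
      obtain ⟨e, c1, c2, c3⟩ := hp
      exact ⟨⟨c2, c3, e.ge, c1⟩, fun hs => (ne_of_gt hs.2.2.1) e⟩
    · rw [← f30] at hp
      obtain ⟨e, c1, c2, c3⟩ := hp
      exact ⟨⟨c1, c2, c3, e.ge⟩, fun hs => (ne_of_gt hs.2.2.2) e⟩
lemma convex_of_pos {P : Fin 4 → ℝ × ℝ}
    (h012 : 0 < dd (P 0) (P 1) (P 2)) (h013 : 0 < dd (P 0) (P 1) (P 3))
    (h023 : 0 < dd (P 0) (P 2) (P 3)) (h123 : 0 < dd (P 1) (P 2) (P 3)) :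
    IsConvexPolygon P := by
  rw [IsConvexPolygon, edges_four, range_four, main_pos h012 h013 h023 h123]

lemma convex_of_neg {P : Fin 4 → ℝ × ℝ}
    (h012 : dd (P 0) (P 1) (P 2) < 0) (h013 : dd (P 0) (P 1) (P 3) < 0)
    (h023 : dd (P 0) (P 2) (P 3) < 0) (h123 : dd (P 1) (P 2) (P 3) < 0) :
    IsConvexPolygon P := by
  have e1 : dd (P 0) (P 3) (P 2) = -dd (P 0) (P 2) (P 3) := by unfold dd; ring
  have e2 : dd (P 0) (P 3) (P 1) = -dd (P 0) (P 1) (P 3) := by unfold dd; ring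
  have e3 : dd (P 0) (P 2) (P 1) = -dd (P 0) (P 1) (P 2) := by unfold dd; ring
  have e4 : dd (P 3) (P 2) (P 1) = -dd (P 1) (P 2) (P 3) := by unfold dd; ring
  have hm := main_pos (by linarith : 0 < dd (P 0) (P 3) (P 2))
    (by linarith : 0 < dd (P 0) (P 3) (P 1))
    (by linarith : 0 < dd (P 0) (P 2) (P 1))
    (by linarith : 0 < dd (P 3) (P 2) (P 1))
  rw [IsConvexPolygon, edges_four, range_four]
  have hset : ({P 0, P 1, P 2, P 3} : Set (ℝ × ℝ)) = {P 0, P 3, P 2, P 1} := by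
    ext x; simp only [Set.mem_insert_iff, Set.mem_singleton_iff]; tauto
  rw [hset, hm, segment_symm ℝ (P 0) (P 3), segment_symm ℝ (P 3) (P 2),
    segment_symm ℝ (P 2) (P 1), segment_symm ℝ (P 1) (P 0)]
  ext x; simp only [Set.mem_union]; tauto

/-- A strict 4-gon `(V_0, V_1, V_2, V_3)` is convex if and only if the four determinants
`Δ_{0,1,2}, Δ_{0,1,3}, Δ_{0,2,3}, Δ_{1,2,3}` all have the same sign (all positive or
all negative). -/
theorem isConvexPolygon_four_iff_dets (P : Fin 4 → ℝ × ℝ) (hP : IsStrictPolygon P) :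
    IsConvexPolygon P ↔
      ((0 < polyDet P 0 1 2 ∧ 0 < polyDet P 0 1 3 ∧
        0 < polyDet P 0 2 3 ∧ 0 < polyDet P 1 2 3) ∨
       (polyDet P 0 1 2 < 0 ∧ polyDet P 0 1 3 < 0 ∧
        polyDet P 0 2 3 < 0 ∧ polyDet P 1 2 3 < 0)) := by
  simp only [polyDet_eq_dd]
  have ha : dd (P 0) (P 1) (P 2) ≠ 0 := dets_ne_zero hP 0 1 2 (by decide) (by decide) (by decide)
  have hb : dd (P 0) (P 1) (P 3) ≠ 0 := dets_ne_zero hP 0 1 3 (by decide) (by decide) (by decide)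
  have hc : dd (P 0) (P 2) (P 3) ≠ 0 := dets_ne_zero hP 0 2 3 (by decide) (by decide) (by decide)
  have hd : dd (P 1) (P 2) (P 3) ≠ 0 := dets_ne_zero hP 1 2 3 (by decide) (by decide) (by decide)
  have quadid : dd (P 1) (P 2) (P 3) - dd (P 0) (P 2) (P 3) + dd (P 0) (P 1) (P 3)
      - dd (P 0) (P 1) (P 2) = 0 := by unfold dd; ring
  constructor
  · intro hconv
    rcases ha.lt_or_gt with ha' | ha' <;> rcases hb.lt_or_gt with hb' | hb' <;>
      rcases hc.lt_or_gt with hc' | hc' <;> rcases hd.lt_or_gt with hd' | hd'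
    -- (-,-,-,-) good
    · exact Or.inr ⟨ha', hb', hc', hd'⟩
    -- (-,-,-,+) : V2 inside triangle; q = P 2, triangle (P1, P0, P3)
    · refine absurd hconv (not_convex_of_witness (vertex_mem_edges P 2)
        (mem_interior_hull (Set.mem_range_self 1) (Set.mem_range_self 0)
          (Set.mem_range_self 3) ?_ ?_ ?_))
      · have e : dd (P 1) (P 0) (P 2) = -dd (P 0) (P 1) (P 2) := by unfold dd; ring
        linarith
      · have e : dd (P 0) (P 3) (P 2) = -dd (P 0) (P 2) (P 3) := by unfold dd; ring
        linarith
      · have e : dd (P 3) (P 1) (P 2) = dd (P 1) (P 2) (P 3) := by unfold dd; ring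
        linarith
    -- (-,-,+,-) : V3 inside reversed triangle; q = P 3, triangle (P1, P0, P2)
    · refine absurd hconv (not_convex_of_witness (vertex_mem_edges P 3)
        (mem_interior_hull (Set.mem_range_self 1) (Set.mem_range_self 0)
          (Set.mem_range_self 2) ?_ ?_ ?_))
      · have e : dd (P 1) (P 0) (P 3) = -dd (P 0) (P 1) (P 3) := by unfold dd; ring
        linarith
      · exact hc'
      · have e : dd (P 2) (P 1) (P 3) = -dd (P 1) (P 2) (P 3) := by unfold dd; ring
        linarith
    -- (-,-,+,+) : crossed; q on edge [P1,P2], triangle (P1, P0, P3)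
    · set t : ℝ := dd (P 0) (P 1) (P 3) / (2 * (dd (P 0) (P 1) (P 3) - dd (P 0) (P 2) (P 3)))
        with htdef
      have hden : dd (P 0) (P 1) (P 3) - dd (P 0) (P 2) (P 3) < 0 := by linarith
      have ht0 : 0 < t := by
        rw [htdef]; exact div_pos_of_neg_of_neg hb' (by linarith)
      have ht1 : t ≤ 1/2 := by
        rw [htdef, div_le_iff_of_neg (by linarith)]; nlinarith
      set q : ℝ × ℝ := (1 - t) • P 1 + t • P 2 with hqdef
      have hedge : q ∈ polygonEdges P := by
        rw [edges_four]
        exact Or.inl (Or.inl (Or.inr ⟨1 - t, t, by linarith, by linarith, by ring, rfl⟩))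
      have haff : ∀ X Y : ℝ × ℝ, dd X Y q = (1 - t) * dd X Y (P 1) + t * dd X Y (P 2) :=
        fun X Y => dd_affine X Y _ _ _ _ (by ring)
      refine absurd hconv (not_convex_of_witness hedge
        (mem_interior_hull (Set.mem_range_self 1) (Set.mem_range_self 0)
          (Set.mem_range_self 3) ?_ ?_ ?_))
      · rw [haff]
        have e0 : dd (P 1) (P 0) (P 1) = 0 := dd_self_left _ _
        have e  : dd (P 1) (P 0) (P 2) = -dd (P 0) (P 1) (P 2) := by unfold dd; ring
        rw [e0, e]; nlinarith
      · rw [haff]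
        have e1 : dd (P 0) (P 3) (P 1) = -dd (P 0) (P 1) (P 3) := by unfold dd; ring
        have e2 : dd (P 0) (P 3) (P 2) = -dd (P 0) (P 2) (P 3) := by unfold dd; ring
        rw [e1, e2]
        have expand : (1 - t) * -dd (P 0) (P 1) (P 3) + t * -dd (P 0) (P 2) (P 3)
            = -(dd (P 0) (P 1) (P 3) - t * (dd (P 0) (P 1) (P 3) - dd (P 0) (P 2) (P 3))) := by
          ring
        rw [expand]
        have hne : dd (P 0) (P 1) (P 3) - dd (P 0) (P 2) (P 3) ≠ 0 := ne_of_lt hden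
        have hmul : t * (dd (P 0) (P 1) (P 3) - dd (P 0) (P 2) (P 3))
            = dd (P 0) (P 1) (P 3) / 2 := by
          rw [htdef]; field_simp
        rw [hmul]; linarith
      · rw [haff]
        have e0 : dd (P 3) (P 1) (P 1) = 0 := dd_self_right _ _
        have e : dd (P 3) (P 1) (P 2) = dd (P 1) (P 2) (P 3) := by unfold dd; ring
        rw [e0, e]; nlinarith
    -- (-,+,-,-)
    · refine absurd hconv (not_convex_of_witness (vertex_mem_edges P 0)
        (mem_interior_hull (Set.mem_range_self 2) (Set.mem_range_self 1)
          (Set.mem_range_self 3) ?_ ?_ ?_))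
      · have e : dd (P 2) (P 1) (P 0) = -(dd (P 0) (P 1) (P 2)) := by unfold dd; ring
        linarith
      · have e : dd (P 1) (P 3) (P 0) = dd (P 0) (P 1) (P 3) := by unfold dd; ring
        linarith
      · have e : dd (P 3) (P 2) (P 0) = -(dd (P 0) (P 2) (P 3)) := by unfold dd; ring
        linarith
    -- (-,+,-,+) impossible
    · exfalso; linarith
    -- (-,+,+,-)
    · set t : ℝ := dd (P 0) (P 2) (P 3) / (2 * (dd (P 0) (P 2) (P 3) - dd (P 1) (P 2) (P 3))) with htdef
      have hden : 0 < dd (P 0) (P 2) (P 3) - dd (P 1) (P 2) (P 3) := by linarith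
      have ht0 : 0 < t := by rw [htdef]; exact div_pos hc' (by linarith)
      have ht1 : t ≤ 1/2 := by rw [htdef, div_le_iff₀ (by linarith)]; nlinarith
      set q : ℝ × ℝ := (1 - t) • P 0 + t • P 1 with hqdef
      have hedge : q ∈ polygonEdges P := by
        rw [edges_four]
        exact Or.inl (Or.inl (Or.inl ⟨1 - t, t, by linarith, by linarith, by ring, rfl⟩))
      have haff : ∀ X Y : ℝ × ℝ, dd X Y q = (1 - t) * dd X Y (P 0) + t * dd X Y (P 1) :=
        fun X Y => dd_affine X Y _ _ _ _ (by ring)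
      refine absurd hconv (not_convex_of_witness hedge
        (mem_interior_hull (Set.mem_range_self 0) (Set.mem_range_self 2)
          (Set.mem_range_self 3) ?_ ?_ ?_))
      · rw [haff]
        have e0 : dd (P 0) (P 2) (P 0) = 0 := dd_self_left _ _
        have e : dd (P 0) (P 2) (P 1) = -(dd (P 0) (P 1) (P 2)) := by unfold dd; ring
        rw [e0, e]; nlinarith
      · rw [haff]
        have e1 : dd (P 2) (P 3) (P 0) = dd (P 0) (P 2) (P 3) := by unfold dd; ring
        have e2 : dd (P 2) (P 3) (P 1) = dd (P 1) (P 2) (P 3) := by unfold dd; ring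
        rw [e1, e2]
        have expand : (1 - t) * (dd (P 0) (P 2) (P 3)) + t * (dd (P 1) (P 2) (P 3)) = dd (P 0) (P 2) (P 3) - t * (dd (P 0) (P 2) (P 3) - dd (P 1) (P 2) (P 3)) := by ring
        rw [expand]
        have hne : dd (P 0) (P 2) (P 3) - dd (P 1) (P 2) (P 3) ≠ 0 := by intro hz; rw [hz] at hden; exact lt_irrefl 0 (by linarith)
        have hmul : t * (dd (P 0) (P 2) (P 3) - dd (P 1) (P 2) (P 3)) = dd (P 0) (P 2) (P 3) / 2 := by
          rw [htdef]; field_simp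
        rw [hmul]; linarith
      · rw [haff]
        have e0 : dd (P 3) (P 0) (P 0) = 0 := dd_self_right _ _
        have e : dd (P 3) (P 0) (P 1) = dd (P 0) (P 1) (P 3) := by unfold dd; ring
        rw [e0, e]; nlinarith
    -- (-,+,+,+)
    · refine absurd hconv (not_convex_of_witness (vertex_mem_edges P 1)
        (mem_interior_hull (Set.mem_range_self 0) (Set.mem_range_self 2)
          (Set.mem_range_self 3) ?_ ?_ ?_))
      · have e : dd (P 0) (P 2) (P 1) = -(dd (P 0) (P 1) (P 2)) := by unfold dd; ring
        linarith
      · have e : dd (P 2) (P 3) (P 1) = dd (P 1) (P 2) (P 3) := by unfold dd; ring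
        linarith
      · have e : dd (P 3) (P 0) (P 1) = dd (P 0) (P 1) (P 3) := by unfold dd; ring
        linarith
    -- (+,-,-,-)
    · refine absurd hconv (not_convex_of_witness (vertex_mem_edges P 1)
        (mem_interior_hull (Set.mem_range_self 2) (Set.mem_range_self 0)
          (Set.mem_range_self 3) ?_ ?_ ?_))
      · have e : dd (P 2) (P 0) (P 1) = dd (P 0) (P 1) (P 2) := by unfold dd; ring
        linarith
      · have e : dd (P 0) (P 3) (P 1) = -(dd (P 0) (P 1) (P 3)) := by unfold dd; ring
        linarith
      · have e : dd (P 3) (P 2) (P 1) = -(dd (P 1) (P 2) (P 3)) := by unfold dd; ring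
        linarith
    -- (+,-,-,+)
    · set t : ℝ := dd (P 0) (P 2) (P 3) / (2 * (dd (P 0) (P 2) (P 3) - dd (P 1) (P 2) (P 3))) with htdef
      have hden : dd (P 0) (P 2) (P 3) - dd (P 1) (P 2) (P 3) < 0 := by linarith
      have ht0 : 0 < t := by rw [htdef]; exact div_pos_of_neg_of_neg hc' (by linarith)
      have ht1 : t ≤ 1/2 := by rw [htdef, div_le_iff_of_neg (by linarith)]; nlinarith
      set q : ℝ × ℝ := (1 - t) • P 0 + t • P 1 with hqdef
      have hedge : q ∈ polygonEdges P := by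
        rw [edges_four]
        exact Or.inl (Or.inl (Or.inl ⟨1 - t, t, by linarith, by linarith, by ring, rfl⟩))
      have haff : ∀ X Y : ℝ × ℝ, dd X Y q = (1 - t) * dd X Y (P 0) + t * dd X Y (P 1) :=
        fun X Y => dd_affine X Y _ _ _ _ (by ring)
      refine absurd hconv (not_convex_of_witness hedge
        (mem_interior_hull (Set.mem_range_self 0) (Set.mem_range_self 3)
          (Set.mem_range_self 2) ?_ ?_ ?_))
      · rw [haff]
        have e0 : dd (P 0) (P 3) (P 0) = 0 := dd_self_left _ _
        have e : dd (P 0) (P 3) (P 1) = -(dd (P 0) (P 1) (P 3)) := by unfold dd; ring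
        rw [e0, e]; nlinarith
      · rw [haff]
        have e1 : dd (P 3) (P 2) (P 0) = -(dd (P 0) (P 2) (P 3)) := by unfold dd; ring
        have e2 : dd (P 3) (P 2) (P 1) = -(dd (P 1) (P 2) (P 3)) := by unfold dd; ring
        rw [e1, e2]
        have expand : (1 - t) * (-(dd (P 0) (P 2) (P 3))) + t * (-(dd (P 1) (P 2) (P 3))) = -(dd (P 0) (P 2) (P 3) - t * (dd (P 0) (P 2) (P 3) - dd (P 1) (P 2) (P 3))) := by ring
        rw [expand]
        have hne : dd (P 0) (P 2) (P 3) - dd (P 1) (P 2) (P 3) ≠ 0 := by intro hz; rw [hz] at hden; exact lt_irrefl 0 (by linarith)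
        have hmul : t * (dd (P 0) (P 2) (P 3) - dd (P 1) (P 2) (P 3)) = dd (P 0) (P 2) (P 3) / 2 := by
          rw [htdef]; field_simp
        rw [hmul]; linarith
      · rw [haff]
        have e0 : dd (P 2) (P 0) (P 0) = 0 := dd_self_right _ _
        have e : dd (P 2) (P 0) (P 1) = dd (P 0) (P 1) (P 2) := by unfold dd; ring
        rw [e0, e]; nlinarith
    -- (+,-,+,-) impossible
    · exfalso; linarith
    -- (+,-,+,+)
    · refine absurd hconv (not_convex_of_witness (vertex_mem_edges P 0)
        (mem_interior_hull (Set.mem_range_self 1) (Set.mem_range_self 2)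
          (Set.mem_range_self 3) ?_ ?_ ?_))
      · have e : dd (P 1) (P 2) (P 0) = dd (P 0) (P 1) (P 2) := by unfold dd; ring
        linarith
      · have e : dd (P 2) (P 3) (P 0) = dd (P 0) (P 2) (P 3) := by unfold dd; ring
        linarith
      · have e : dd (P 3) (P 1) (P 0) = -(dd (P 0) (P 1) (P 3)) := by unfold dd; ring
        linarith
    -- (+,+,-,-)
    · set t : ℝ := dd (P 0) (P 1) (P 3) / (2 * (dd (P 0) (P 1) (P 3) - dd (P 0) (P 2) (P 3))) with htdef
      have hden : 0 < dd (P 0) (P 1) (P 3) - dd (P 0) (P 2) (P 3) := by linarith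
      have ht0 : 0 < t := by rw [htdef]; exact div_pos hb' (by linarith)
      have ht1 : t ≤ 1/2 := by rw [htdef, div_le_iff₀ (by linarith)]; nlinarith
      set q : ℝ × ℝ := (1 - t) • P 1 + t • P 2 with hqdef
      have hedge : q ∈ polygonEdges P := by
        rw [edges_four]
        exact Or.inl (Or.inl (Or.inr ⟨1 - t, t, by linarith, by linarith, by ring, rfl⟩))
      have haff : ∀ X Y : ℝ × ℝ, dd X Y q = (1 - t) * dd X Y (P 1) + t * dd X Y (P 2) :=
        fun X Y => dd_affine X Y _ _ _ _ (by ring)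
      refine absurd hconv (not_convex_of_witness hedge
        (mem_interior_hull (Set.mem_range_self 0) (Set.mem_range_self 1)
          (Set.mem_range_self 3) ?_ ?_ ?_))
      · rw [haff]
        have e0 : dd (P 0) (P 1) (P 1) = 0 := dd_self_right _ _
        have e : dd (P 0) (P 1) (P 2) = dd (P 0) (P 1) (P 2) := by unfold dd; ring
        rw [e0, e]; nlinarith
      · rw [haff]
        have e0 : dd (P 1) (P 3) (P 1) = 0 := dd_self_left _ _
        have e : dd (P 1) (P 3) (P 2) = -(dd (P 1) (P 2) (P 3)) := by unfold dd; ring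
        rw [e0, e]; nlinarith
      · rw [haff]
        have e1 : dd (P 3) (P 0) (P 1) = dd (P 0) (P 1) (P 3) := by unfold dd; ring
        have e2 : dd (P 3) (P 0) (P 2) = dd (P 0) (P 2) (P 3) := by unfold dd; ring
        rw [e1, e2]
        have expand : (1 - t) * (dd (P 0) (P 1) (P 3)) + t * (dd (P 0) (P 2) (P 3)) = dd (P 0) (P 1) (P 3) - t * (dd (P 0) (P 1) (P 3) - dd (P 0) (P 2) (P 3)) := by ring
        rw [expand]
        have hne : dd (P 0) (P 1) (P 3) - dd (P 0) (P 2) (P 3) ≠ 0 := by intro hz; rw [hz] at hden; exact lt_irrefl 0 (by linarith)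
        have hmul : t * (dd (P 0) (P 1) (P 3) - dd (P 0) (P 2) (P 3)) = dd (P 0) (P 1) (P 3) / 2 := by
          rw [htdef]; field_simp
        rw [hmul]; linarith
    -- (+,+,-,+)
    · refine absurd hconv (not_convex_of_witness (vertex_mem_edges P 3)
        (mem_interior_hull (Set.mem_range_self 0) (Set.mem_range_self 1)
          (Set.mem_range_self 2) ?_ ?_ ?_))
      · have e : dd (P 0) (P 1) (P 3) = dd (P 0) (P 1) (P 3) := by unfold dd; ring
        linarith
      · have e : dd (P 1) (P 2) (P 3) = dd (P 1) (P 2) (P 3) := by unfold dd; ring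
        linarith
      · have e : dd (P 2) (P 0) (P 3) = -(dd (P 0) (P 2) (P 3)) := by unfold dd; ring
        linarith
    -- (+,+,+,-)
    · refine absurd hconv (not_convex_of_witness (vertex_mem_edges P 2)
        (mem_interior_hull (Set.mem_range_self 0) (Set.mem_range_self 1)
          (Set.mem_range_self 3) ?_ ?_ ?_))
      · have e : dd (P 0) (P 1) (P 2) = dd (P 0) (P 1) (P 2) := by unfold dd; ring
        linarith
      · have e : dd (P 1) (P 3) (P 2) = -(dd (P 1) (P 2) (P 3)) := by unfold dd; ring
        linarith
      · have e : dd (P 3) (P 0) (P 2) = dd (P 0) (P 2) (P 3) := by unfold dd; ring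
        linarith
    -- (+,+,+,+) good
    · exact Or.inl ⟨ha', hb', hc', hd'⟩
  · rintro (⟨h1, h2, h3, h4⟩ | ⟨h1, h2, h3, h4⟩)
    · exact convex_of_pos h1 h2 h3 h4
    · exact convex_of_neg h1 h2 h3 h4
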